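/- Let n ≥ 2 and let S be an n×n irreducible column stochastic matrix such that RSR⁻¹ is symmetric for some invertible diagonal matrix R; write S(d) = (1−d)I + dS. Let A₁ be a non-scalar diagonal matrix with positive diagonal entries, let c > 0, and set A₂ = cA₁⁻¹ (so A₂A₁ is a scalar matrix). If d ∈ [0, 1) is such that the spectral radius ρ(S(d)A₂S(d)A₁) = 1, then ρ(S(d̃)A₂S(d̃)A₁) > 1 for every d̃ ∈ (d, 1]. (Ecologically: along an out-of-phase period-2 orbit whose product fitness matrix is scalar, there is selection for every higher dispersal rate.) -/

import Mathlib

open Matrix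

/-- The spectral radius of a real square matrix: the maximum modulus of its complex
eigenvalues. -/
noncomputable def specRad {n : ℕ} (M : Matrix (Fin n) (Fin n) ℝ) : ℝ :=
  sSup ((fun μ => ‖μ‖) '' spectrum ℂ (M.map (fun x => (x : ℂ))))

/-- A real square matrix is column stochastic if its entries are nonnegative and each
column sums to one. -/
def ColStochastic {n : ℕ} (S : Matrix (Fin n) (Fin n) ℝ) : Prop :=
  (∀ i j, 0 ≤ S i j) ∧ ∀ j, ∑ i, S i j = 1

/-- A square matrix is irreducible if for every pair of indices `(j,k)` some positive
power has positive `(j,k)` entry. -/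
def MatIrreducible {n : ℕ} (S : Matrix (Fin n) (Fin n) ℝ) : Prop :=
  ∀ j k : Fin n, ∃ p : ℕ, 0 < p ∧ 0 < (S ^ p) j k

/-!
Let `q = r²`, so that `q i * S i j = q j * S j i`, and conjugate by `P = diagonal √(a q)`.
This turns `S(d) A₂ S(d) A₁` into `c • K(d) K(d)ᵀ` with `K(d) = P S(d) P⁻¹ = (1 - d) I + d K(1)`,
so its spectral radius is `|c| ‖K(d)‖²` in the operator 2-norm. The positive vector `p / q` is
fixed by every `K(d)`. For `d > 0` we get `‖K(d)‖ > 1`: a contraction fixing a vector is fixed by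
its transpose as well, and `K(d)ᵀ (p / q) = p / q` says that `a` is a left fixed vector of the
irreducible stochastic matrix `S(d)`, hence constant. Since `d ↦ ‖K(d)‖` is convex with value `1`
at `0`, it increases strictly beyond any point where it exceeds `1`.
-/

open scoped Matrix.Norms.L2Operator

theorem ContinuousLinearMap.adjoint_apply_eq_self_of_norm_le_one
    {𝕜 E : Type*} [RCLike 𝕜] [NormedAddCommGroup E] [InnerProductSpace 𝕜 E] [CompleteSpace E]
    {T : E →L[𝕜] E} (hT : ‖T‖ ≤ 1) {x : E} (hx : T x = x) : T.adjoint x = x := by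
  have hle : ‖T.adjoint x‖ ≤ ‖x‖ :=
    calc ‖T.adjoint x‖ ≤ ‖T.adjoint‖ * ‖x‖ := T.adjoint.le_opNorm x
      _ ≤ ‖x‖ := by
        rw [ContinuousLinearMap.adjoint.norm_map]
        exact mul_le_of_le_one_left (norm_nonneg x) hT
  have hinner : RCLike.re (inner 𝕜 (T.adjoint x) x) = ‖x‖ ^ 2 := by
    rw [T.adjoint_inner_left, hx, inner_self_eq_norm_sq]
  have hsq : ‖T.adjoint x - x‖ ^ 2 ≤ 0 := by
    rw [norm_sub_sq (𝕜 := 𝕜), hinner]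
    nlinarith [norm_nonneg (T.adjoint x), norm_nonneg x]
  exact sub_eq_zero.mp (norm_le_zero_iff.mp (by nlinarith [norm_nonneg (T.adjoint x - x)]))

theorem norm_one_sub_smul_one_add_smul_lt {A : Type*} [NormedRing A] [NormedAlgebra ℝ A]
    [NormOneClass A] {X : A} {d t : ℝ} (hd : 0 ≤ d) (hdt : d < t)
    (ht : 1 < ‖(1 - t) • (1 : A) + t • X‖) :
    ‖(1 - d) • (1 : A) + d • X‖ < ‖(1 - t) • (1 : A) + t • X‖ := by
  set N := ‖(1 - t) • (1 : A) + t • X‖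
  have htpos : 0 < t := hd.trans_lt hdt
  set s := d / t
  have hs0 : 0 ≤ s := div_nonneg hd htpos.le
  have hs1 : s < 1 := (div_lt_one htpos).mpr hdt
  have hsplit : (1 - d) • (1 : A) + d • X = (1 - s) • 1 + s • ((1 - t) • 1 + t • X) := by
    have : s * t = d := div_mul_cancel₀ d htpos.ne'
    rw [smul_add, smul_smul, smul_smul, ← add_assoc, ← add_smul, this]
    congr 2
    linear_combination this
  calc ‖(1 - d) • (1 : A) + d • X‖ ≤ (1 - s) + s * N := by
        rw [hsplit]
        refine (norm_add_le _ _).trans_eq ?_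
        rw [norm_smul, norm_smul, norm_one, mul_one, Real.norm_of_nonneg hs0,
          Real.norm_of_nonneg (by linarith)]
    _ < N := by nlinarith

theorem sSup_norm_spectrum_eq_toReal_spectralRadius {A : Type*} [NormedRing A]
    [NormedAlgebra ℂ A] [CompleteSpace A] [Nontrivial A] (a : A) :
    sSup ((fun μ => ‖μ‖) '' spectrum ℂ a) = (spectralRadius ℂ a).toReal := by
  obtain ⟨k, hk, hkr⟩ :=
    spectrum.exists_nnnorm_eq_spectralRadius_of_nonempty (spectrum.nonempty a)
  rw [← hkr, ENNReal.coe_toReal, coe_nnnorm]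
  refine IsGreatest.csSup_eq ⟨⟨k, hk, rfl⟩, ?_⟩
  rintro _ ⟨μ, hμ, rfl⟩
  have : (‖μ‖₊ : ENNReal) ≤ ‖k‖₊ :=
    hkr ▸ le_iSup₂ (f := fun k (_ : k ∈ spectrum ℂ a) => (‖k‖₊ : ENNReal)) μ hμ
  exact NNReal.coe_le_coe.mpr (ENNReal.coe_le_coe.mp this)

namespace Matrix

variable {ι : Type*} [Fintype ι] [DecidableEq ι]

noncomputable def complexify : Matrix ι ι ℝ →ₐ[ℝ] Matrix ι ι ℂ := (Algebra.ofId ℝ ℂ).mapMatrix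

theorem complexify_transpose (M : Matrix ι ι ℝ) : complexify Mᵀ = star (complexify M) := by
  ext i j
  simp [complexify]

theorem complexify_mulVec (M : Matrix ι ι ℝ) (v : ι → ℝ) :
    complexify M *ᵥ (fun i => (v i : ℂ)) = fun i => ((M *ᵥ v) i : ℂ) := by
  funext i
  exact (Complex.ofRealHom.map_mulVec M v i).symm

theorem conjTranspose_mulVec_eq_self_of_norm_le_one {𝕜 : Type*} [RCLike 𝕜]
    {A : Matrix ι ι 𝕜} (hA : ‖A‖ ≤ 1) {v : ι → 𝕜} (hv : A *ᵥ v = v) : Aᴴ *ᵥ v = v := by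
  have hfix : toEuclideanCLM (𝕜 := 𝕜) A (WithLp.toLp 2 v) = WithLp.toLp 2 v := by
    rw [toEuclideanCLM_toLp, hv]
  have := ContinuousLinearMap.adjoint_apply_eq_self_of_norm_le_one
    (T := toEuclideanCLM (𝕜 := 𝕜) A) hA hfix
  rw [← ContinuousLinearMap.star_eq_adjoint, ← map_star (toEuclideanCLM (𝕜 := 𝕜) (n := ι)),
    star_eq_conjTranspose, toEuclideanCLM_toLp] at this
  exact congrArg WithLp.ofLp this

theorem transpose_mulVec_eq_self_of_norm_complexify_le_one {M : Matrix ι ι ℝ}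
    (hM : ‖complexify M‖ ≤ 1) {v : ι → ℝ} (hv : M *ᵥ v = v) : Mᵀ *ᵥ v = v := by
  have hvc : complexify M *ᵥ (fun i => (v i : ℂ)) = fun i => (v i : ℂ) := by
    rw [complexify_mulVec, hv]
  have := conjTranspose_mulVec_eq_self_of_norm_le_one hM hvc
  rw [← star_eq_conjTranspose, ← complexify_transpose, complexify_mulVec] at this
  funext i
  exact_mod_cast congrFun this i

theorem diagonal_mul_diagonal_inv {v : ι → ℝ} (hv : ∀ i, v i ≠ 0) :
    diagonal v * diagonal v⁻¹ = 1 := by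
  rw [diagonal_mul_diagonal, ← diagonal_one]
  exact congrArg diagonal (funext fun i => mul_inv_cancel₀ (hv i))

theorem diagonal_inv_mul_diagonal {v : ι → ℝ} (hv : ∀ i, v i ≠ 0) :
    diagonal v⁻¹ * diagonal v = 1 := by
  rw [diagonal_mul_diagonal, ← diagonal_one]
  exact congrArg diagonal (funext fun i => inv_mul_cancel₀ (hv i))

theorem inv_diagonal_of_ne_zero {v : ι → ℝ} (hv : ∀ i, v i ≠ 0) :
    (diagonal v)⁻¹ = diagonal v⁻¹ :=
  inv_eq_right_inv (diagonal_mul_diagonal_inv hv)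

theorem pow_apply_le_pow_apply {A B : Matrix ι ι ℝ} (hA : ∀ i j, 0 ≤ A i j)
    (hAB : ∀ i j, A i j ≤ B i j) (k : ℕ) (i j : ι) : (A ^ k) i j ≤ (B ^ k) i j := by
  induction k generalizing j with
  | zero => rfl
  | succ k ih =>
    rw [pow_succ, pow_succ, mul_apply, mul_apply]
    exact Finset.sum_le_sum fun m _ =>
      mul_le_mul (ih m) (hAB m j) (hA m j) ((pow_apply_nonneg hA k i m).trans (ih m))

end Matrix

section SpectralRadius

variable {n : ℕ}

theorem specRad_eq_sSup_norm_spectrum (M : Matrix (Fin n) (Fin n) ℝ) :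
    specRad M = sSup ((fun μ => ‖μ‖) '' spectrum ℂ (complexify M)) := rfl

theorem specRad_conj (M : Matrix (Fin n) (Fin n) ℝ) {P : Matrix (Fin n) (Fin n) ℝ}
    (hP : IsUnit P) : specRad (P * M * P⁻¹) = specRad M := by
  obtain ⟨u, rfl⟩ := hP
  have h := spectrum.units_conjugate (R := ℂ) (a := complexify M)
    (u := Units.map (complexify : Matrix (Fin n) (Fin n) ℝ →ₐ[ℝ] _).toMonoidHom u)
  rw [specRad_eq_sSup_norm_spectrum, specRad_eq_sSup_norm_spectrum, ← coe_units_inv, map_mul,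
    map_mul]
  exact congrArg (fun s => sSup ((fun μ : ℂ => ‖μ‖) '' s)) h

theorem specRad_eq_norm_of_isSymm [NeZero n] {M : Matrix (Fin n) (Fin n) ℝ} (hM : M.IsSymm) :
    specRad M = ‖complexify M‖ := by
  have hsa : IsSelfAdjoint (complexify M) := by
    rw [IsSelfAdjoint, ← complexify_transpose, hM.eq]
  rw [specRad_eq_sSup_norm_spectrum, sSup_norm_spectrum_eq_toReal_spectralRadius,
    hsa.toReal_spectralRadius_complex_eq_norm]

theorem specRad_smul_mul_transpose [NeZero n] (c : ℝ) (B : Matrix (Fin n) (Fin n) ℝ) :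
    specRad (c • (B * Bᵀ)) = |c| * ‖complexify B‖ ^ 2 := by
  rw [specRad_eq_norm_of_isSymm (by simp [IsSymm, transpose_mul]), map_smul, map_mul,
    complexify_transpose, norm_smul, CStarRing.norm_self_mul_star, Real.norm_eq_abs, sq]

end SpectralRadius

section Dispersal

variable {ι : Type*} [DecidableEq ι]

def dispersalMatrix (S : Matrix ι ι ℝ) (d : ℝ) : Matrix ι ι ℝ := (1 - d) • 1 + d • S

theorem smul_apply_le_dispersalMatrix_apply {S : Matrix ι ι ℝ} {d : ℝ} (hd1 : d ≤ 1) (i j : ι) :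
    (d • S) i j ≤ dispersalMatrix S d i j := by
  have : (0 : ℝ) ≤ (1 : Matrix ι ι ℝ) i j := by
    rw [one_apply]; split_ifs <;> norm_num
  simp only [dispersalMatrix, Matrix.add_apply, Matrix.smul_apply, smul_eq_mul]
  nlinarith

variable [Fintype ι]

theorem complexify_dispersalMatrix (S : Matrix ι ι ℝ) (d : ℝ) :
    complexify (dispersalMatrix S d) = (1 - d) • (1 : Matrix ι ι ℂ) + d • complexify S := by
  rw [dispersalMatrix, map_add, map_smul, map_smul, map_one]

theorem dispersalMatrix_conj (S : Matrix ι ι ℝ) (d : ℝ) {P Q : Matrix ι ι ℝ}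
    (hPQ : P * Q = 1) : P * dispersalMatrix S d * Q = dispersalMatrix (P * S * Q) d := by
  simp only [dispersalMatrix, Matrix.mul_add, Matrix.add_mul, Matrix.mul_smul, Matrix.smul_mul,
    Matrix.mul_one, hPQ]

theorem dispersalMatrix_mulVec_of_mulVec_eq_self {S : Matrix ι ι ℝ} {v : ι → ℝ}
    (hv : S *ᵥ v = v) (d : ℝ) : dispersalMatrix S d *ᵥ v = v := by
  rw [dispersalMatrix, add_mulVec, smul_mulVec, smul_mulVec, one_mulVec, hv, ← add_smul,
    sub_add_cancel, one_smul]

theorem dispersalMatrix_mem_colStochastic {S : Matrix ι ι ℝ} (hS : S ∈ colStochastic ℝ ι)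
    {d : ℝ} (hd0 : 0 ≤ d) (hd1 : d ≤ 1) : dispersalMatrix S d ∈ colStochastic ℝ ι :=
  convex_colStochastic (one_mem _) hS (by linarith) hd0 (by ring)

end Dispersal

theorem MatIrreducible.dispersalMatrix {n : ℕ} {S : Matrix (Fin n) (Fin n) ℝ}
    (hirr : MatIrreducible S) (hS : ∀ i j, 0 ≤ S i j) {d : ℝ} (hd0 : 0 < d) (hd1 : d ≤ 1) :
    MatIrreducible (dispersalMatrix S d) := by
  intro j k
  obtain ⟨p, hp, hpos⟩ := hirr j k
  refine ⟨p, hp, lt_of_lt_of_le ?_ (pow_apply_le_pow_apply (A := d • S)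
    (fun i j => mul_nonneg hd0.le (hS i j)) (smul_apply_le_dispersalMatrix_apply hd1) p j k)⟩
  rw [smul_pow, Matrix.smul_apply, smul_eq_mul]
  positivity

theorem MatIrreducible.eq_of_vecMul_eq_self {n : ℕ} {T : Matrix (Fin n) (Fin n) ℝ}
    (hT : T ∈ colStochastic ℝ (Fin n)) (hirr : MatIrreducible T) {x : Fin n → ℝ}
    (hx : x ᵥ* T = x) (i j : Fin n) : x i = x j := by
  have : Nonempty (Fin n) := ⟨i⟩
  obtain ⟨i₀, hi₀⟩ := Finite.exists_min x
  set y : Fin n → ℝ := x - x i₀ • 1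
  have hy : ∀ k, 0 ≤ y k := fun k => by simp [y, hi₀ k]
  have hyT : y ᵥ* T = y := by
    rw [sub_vecMul, smul_vecMul, one_vecMul_of_mem_colStochastic hT, hx]
  have hyTp : ∀ p : ℕ, y ᵥ* T ^ p = y := by
    intro p
    induction p with
    | zero => rw [pow_zero, vecMul_one]
    | succ p ih => rw [pow_succ, ← vecMul_vecMul, ih, hyT]
  -- `y ≥ 0` is fixed by every power of `T` and vanishes at `i₀`; irreducibility spreads the zero.
  have hy0 : ∀ k, y k = 0 := by
    intro k
    obtain ⟨p, -, hpos⟩ := hirr k i₀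
    have hsum : ∑ m, y m * (T ^ p) m i₀ = 0 := by
      have := congrFun (hyTp p) i₀
      simpa [vecMul, dotProduct, y] using this
    have hTp : ∀ m, 0 ≤ (T ^ p) m i₀ := fun m =>
      pow_apply_nonneg (fun _ _ => nonneg_of_mem_colStochastic hT) p m i₀
    have hterm := (Finset.sum_eq_zero_iff_of_nonneg fun m _ => mul_nonneg (hy m) (hTp m)).mp hsum k
      (Finset.mem_univ k)
    exact (mul_eq_zero.mp hterm).resolve_right hpos.ne'
  have hconst : ∀ k, x k = x i₀ := fun k => by simpa [y, sub_eq_zero] using hy0 k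
  exact (hconst i).trans (hconst j).symm

section Reversible

variable {ι : Type*}

def IsReversible (q : ι → ℝ) (S : Matrix ι ι ℝ) : Prop :=
  ∀ i j, q i * S i j = q j * S j i

variable {q a p : ι → ℝ}

theorem IsReversible.dispersalMatrix [DecidableEq ι] {S : Matrix ι ι ℝ} (hS : IsReversible q S)
    (d : ℝ) : IsReversible q (dispersalMatrix S d) := by
  intro i j
  simp only [_root_.dispersalMatrix, Matrix.add_apply, Matrix.smul_apply, smul_eq_mul]
  rcases eq_or_ne i j with rfl | hij
  · rfl
  · rw [one_apply_ne hij, one_apply_ne hij.symm]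
    linear_combination d * hS i j

theorem IsReversible.mulVec_inv_eq_self [Fintype ι] {S : Matrix ι ι ℝ} (hS : IsReversible q S)
    (hq : ∀ i, q i ≠ 0) (hcol : ∀ j, ∑ i, S i j = 1) : S *ᵥ q⁻¹ = q⁻¹ := by
  funext i
  have hterm : ∀ j, S i j * (q j)⁻¹ = S j i * (q i)⁻¹ := fun j => by
    field_simp [hq i, hq j]
    linear_combination hS i j
  simp only [mulVec, dotProduct, Pi.inv_apply, hterm, ← Finset.sum_mul, hcol, one_mul]

variable [Fintype ι] [DecidableEq ι]

theorem isReversible_sq_of_isSymm {S : Matrix ι ι ℝ} {r : ι → ℝ} (hr : ∀ i, r i ≠ 0)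
    (hsym : (diagonal r * S * (diagonal r)⁻¹).IsSymm) : IsReversible (r ^ 2) S := by
  intro i j
  have h := congrFun (congrFun hsym j) i
  simp only [transpose_apply, inv_diagonal_of_ne_zero hr, mul_diagonal, diagonal_mul,
    Pi.inv_apply] at h
  field_simp [hr i, hr j] at h
  simp only [Pi.pow_apply]
  linear_combination h

theorem IsReversible.diagonal_conj_eq_mul_transpose {T : Matrix ι ι ℝ}
    (hT : IsReversible q T) (hq : ∀ i, q i ≠ 0) (hp : ∀ i, p i ≠ 0)
    (hpq : ∀ i, p i ^ 2 = a i * q i) :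
    diagonal p * (T * (diagonal a)⁻¹ * (T * diagonal a)) * diagonal p⁻¹ =
      (diagonal p * T * diagonal p⁻¹) * (diagonal p * T * diagonal p⁻¹)ᵀ := by
  have ha : ∀ i, a i ≠ 0 := fun i h => hp i (by simpa [h] using hpq i)
  have hTa : ∀ m j, T m j = q j * T j m / q m := fun m j => by
    field_simp [hq m]
    linear_combination hT m j
  ext i j
  rw [inv_diagonal_of_ne_zero ha, mul_diagonal, diagonal_mul, mul_apply, mul_apply,
    Finset.mul_sum, Finset.sum_mul]
  refine Finset.sum_congr rfl fun m _ => ?_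
  simp only [mul_diagonal, diagonal_mul, transpose_apply, Pi.inv_apply]
  rw [hTa m j]
  field_simp [hq m, hp m, hp j, ha m]
  linear_combination (p i * T i m * q j * T j m * a j) * hpq m -
    (p i * T i m * a m * T j m * q m) * hpq j

theorem IsReversible.diagonal_conj_mulVec_eq_self {S : Matrix ι ι ℝ} (hS : IsReversible q S)
    (hq : ∀ i, q i ≠ 0) (hcol : ∀ j, ∑ i, S i j = 1) (hp : ∀ i, p i ≠ 0) :
    (diagonal p * S * diagonal p⁻¹) *ᵥ (p / q) = p / q := by
  have hpq : diagonal p⁻¹ *ᵥ (p / q) = q⁻¹ := by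
    funext i
    simp [mulVec_diagonal, hp i, div_eq_mul_inv]
  rw [← mulVec_mulVec, ← mulVec_mulVec, hpq, hS.mulVec_inv_eq_self hq hcol]
  funext i
  simp [mulVec_diagonal, div_eq_mul_inv]

theorem vecMul_eq_self_of_vecMul_diagonal_conj {T : Matrix ι ι ℝ} (hp : ∀ i, p i ≠ 0)
    (hpq : ∀ i, p i ^ 2 = a i * q i) (h : (p / q) ᵥ* (diagonal p * T * diagonal p⁻¹) = p / q) :
    a ᵥ* T = a := by
  have hq : ∀ i, q i ≠ 0 := fun i hqi => hp i (by simpa [hqi] using hpq i)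
  have hdiag : (p / q) ᵥ* diagonal p = a := by
    funext i
    rw [vecMul_diagonal, Pi.div_apply]
    field_simp [hq i]
    linear_combination hpq i
  rw [← vecMul_vecMul, ← vecMul_vecMul, hdiag] at h
  calc a ᵥ* T = (a ᵥ* T) ᵥ* (diagonal p⁻¹ * diagonal p) := by
        rw [diagonal_inv_mul_diagonal hp, vecMul_one]
    _ = (p / q) ᵥ* diagonal p := by rw [← vecMul_vecMul, h]
    _ = a := hdiag

end Reversible

section Symmetrized

variable {n : ℕ} {S : Matrix (Fin n) (Fin n) ℝ} {q a p : Fin n → ℝ}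

theorem specRad_dispersalMatrix_mul_eq_norm_sq [NeZero n] (hS : IsReversible q S) (hq : ∀ i, q i ≠ 0)
    (hp : ∀ i, p i ≠ 0) (hpq : ∀ i, p i ^ 2 = a i * q i) (c d : ℝ) :
    specRad (dispersalMatrix S d * (c • (diagonal a)⁻¹) * (dispersalMatrix S d * diagonal a)) =
      |c| * ‖complexify (dispersalMatrix (diagonal p * S * diagonal p⁻¹) d)‖ ^ 2 := by
  set T := dispersalMatrix S d
  have hP : IsUnit (diagonal p) := isUnit_diagonal.mpr (Pi.isUnit_iff.mpr fun i => (hp i).isUnit)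
  calc specRad (T * (c • (diagonal a)⁻¹) * (T * diagonal a))
      = specRad (diagonal p * (c • (T * (diagonal a)⁻¹ * (T * diagonal a))) *
          (diagonal p)⁻¹) := by
        rw [specRad_conj _ hP, Matrix.mul_smul, Matrix.smul_mul]
    _ = specRad (c • ((diagonal p * T * diagonal p⁻¹) * (diagonal p * T * diagonal p⁻¹)ᵀ)) := by
        rw [inv_diagonal_of_ne_zero hp, Matrix.mul_smul, Matrix.smul_mul,
          (hS.dispersalMatrix d).diagonal_conj_eq_mul_transpose hq hp hpq]
    _ = _ := by
        rw [specRad_smul_mul_transpose, dispersalMatrix_conj S d (diagonal_mul_diagonal_inv hp)]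

theorem one_lt_norm_complexify_dispersalMatrix (hS : S ∈ colStochastic ℝ (Fin n))
    (hirr : MatIrreducible S) (hrev : IsReversible q S) (hq : ∀ i, q i ≠ 0) (hp : ∀ i, p i ≠ 0)
    (hpq : ∀ i, p i ^ 2 = a i * q i) (hns : ∃ j k, a j ≠ a k) {d : ℝ} (hd0 : 0 < d)
    (hd1 : d ≤ 1) : 1 < ‖complexify (dispersalMatrix (diagonal p * S * diagonal p⁻¹) d)‖ := by
  by_contra! hle
  have hfix := dispersalMatrix_mulVec_of_mulVec_eq_self
    (hrev.diagonal_conj_mulVec_eq_self hq (mem_colStochastic_iff_sum.mp hS).2 hp) d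
  have hfixT := transpose_mulVec_eq_self_of_norm_complexify_le_one hle hfix
  rw [mulVec_transpose, ← dispersalMatrix_conj S d (diagonal_mul_diagonal_inv hp)] at hfixT
  have haT := vecMul_eq_self_of_vecMul_diagonal_conj hp hpq hfixT
  obtain ⟨j, k, hjk⟩ := hns
  exact hjk <| (hirr.dispersalMatrix (fun _ _ => nonneg_of_mem_colStochastic hS) hd0 hd1
    ).eq_of_vecMul_eq_self (dispersalMatrix_mem_colStochastic hS hd0.le hd1) haT j k

end Symmetrized

theorem selection_for_higher_dispersal_general {n : ℕ}
    (S : Matrix (Fin n) (Fin n) ℝ) (hS : ColStochastic S) (hirr : MatIrreducible S)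
    (r : Fin n → ℝ) (hr : ∀ i, r i ≠ 0)
    (hsym : (Matrix.diagonal r * S * (Matrix.diagonal r)⁻¹).IsSymm)
    (a : Fin n → ℝ) (ha : ∀ j, 0 < a j) (hns : ∃ j k, a j ≠ a k)
    (c : ℝ)
    (A₂ : Matrix (Fin n) (Fin n) ℝ) (hA₂ : A₂ = c • (Matrix.diagonal a)⁻¹)
    (d : ℝ) (hd0 : 0 ≤ d)
    (hres : specRad (((1 - d) • 1 + d • S) * A₂ *
      (((1 - d) • 1 + d • S) * Matrix.diagonal a)) = 1) :
    ∀ dt : ℝ, d < dt → dt ≤ 1 →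
      1 < specRad (((1 - dt) • 1 + dt • S) * A₂ *
        (((1 - dt) • 1 + dt • S) * Matrix.diagonal a)) := by
  intro dt hdt hdt1
  subst hA₂
  have : NeZero n := .of_pos hns.choose.pos
  set q : Fin n → ℝ := r ^ 2
  have hq : ∀ i, 0 < q i := fun i => by
    have := hr i
    simp only [q, Pi.pow_apply]
    positivity
  set p : Fin n → ℝ := fun i => √(a i * q i)
  have hp : ∀ i, p i ≠ 0 := fun i => (Real.sqrt_pos.mpr (mul_pos (ha i) (hq i))).ne'
  have hpq : ∀ i, p i ^ 2 = a i * q i := fun i => Real.sq_sqrt (mul_pos (ha i) (hq i)).le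
  have hrev : IsReversible q S := isReversible_sq_of_isSymm hr hsym
  have hρ := specRad_dispersalMatrix_mul_eq_norm_sq hrev (fun i => (hq i).ne') hp hpq c
  set K := diagonal p * S * diagonal p⁻¹
  have hgrow : ‖complexify (dispersalMatrix K d)‖ < ‖complexify (dispersalMatrix K dt)‖ := by
    have hdt0 := one_lt_norm_complexify_dispersalMatrix (mem_colStochastic_iff_sum.mpr hS) hirr
      hrev (fun i => (hq i).ne') hp hpq hns (hd0.trans_lt hdt) hdt1
    simp only [complexify_dispersalMatrix] at hdt0 ⊢
    exact norm_one_sub_smul_one_add_smul_lt hd0 hdt hdt0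
  have hres' := (hρ d).symm.trans hres
  have hc : 0 < |c| := (abs_nonneg c).lt_of_ne fun h => by simp [← h] at hres'
  calc 1 = |c| * ‖complexify (dispersalMatrix K d)‖ ^ 2 := hres'.symm
    _ < |c| * ‖complexify (dispersalMatrix K dt)‖ ^ 2 :=
      mul_lt_mul_of_pos_left (pow_lt_pow_left₀ hgrow (norm_nonneg _) two_ne_zero) hc
    _ = _ := (hρ dt).symm

/-- Along an out-of-phase period-2 orbit whose product fitness matrix `A₂A₁ = cI` is
scalar (`A₁` diagonal, positive, non-scalar; `A₂ = cA₁⁻¹`): if the resident dispersal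
rate `d ∈ [0,1)` satisfies `ρ(S(d)A₂S(d)A₁) = 1`, then every higher dispersal rate
`d̃ ∈ (d,1]` invades, i.e. `ρ(S(d̃)A₂S(d̃)A₁) > 1`. -/
theorem selection_for_higher_dispersal {n : ℕ} (hn : 2 ≤ n)
    (S : Matrix (Fin n) (Fin n) ℝ) (hS : ColStochastic S) (hirr : MatIrreducible S)
    (r : Fin n → ℝ) (hr : ∀ i, r i ≠ 0)
    (hsym : (Matrix.diagonal r * S * (Matrix.diagonal r)⁻¹).IsSymm)
    (a : Fin n → ℝ) (ha : ∀ j, 0 < a j) (hns : ∃ j k, a j ≠ a k)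
    (c : ℝ) (hc : 0 < c)
    (A₂ : Matrix (Fin n) (Fin n) ℝ) (hA₂ : A₂ = c • (Matrix.diagonal a)⁻¹)
    (d : ℝ) (hd0 : 0 ≤ d) (hd1 : d < 1)
    (hres : specRad (((1 - d) • 1 + d • S) * A₂ *
      (((1 - d) • 1 + d • S) * Matrix.diagonal a)) = 1) :
    ∀ dt : ℝ, d < dt → dt ≤ 1 →
      1 < specRad (((1 - dt) • 1 + dt • S) * A₂ *
        (((1 - dt) • 1 + dt • S) * Matrix.diagonal a)) :=
  selection_for_higher_dispersal_general S hS hirr r hr hsym a ha hns c A₂ hA₂ d hd0 hres
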